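/- arXiv:math/0108091 — 2 statements merged into one kernel-verified Lean document; each statement's English description precedes it below -/
import Mathlib

section
/- (Kopell's Lemma) Suppose f and g are orientation-preserving C² diffeomorphisms of the half-open interval [a,b) that commute, i.e., f∘g = g∘f. If f has no fixed point in the open interval (a,b) and g has at least one fixed point in (a,b), then g is the identity. -/
/-!
Replacing `f` by its inverse if necessary, `f x < x` on `(a, b)`, so every `f`-orbit decreases
to `a`. The `f`-orbit of a fixed point of `g` consists of fixed points of `g` accumulating at `a`,
which forces `g'(a) = 1`. On a fundamental domain `D = [f x₀, x₀]` bounded by two of them,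
commutation gives `(g^m)'(z) = (g^m)'(f^n z) · (f^n)'(z) / (f^n)'(g^m z)`. The `f^n`-orbits of
`z` and `g^m z` run through the disjoint intervals `f^j D`, so the `C²` hypothesis bounds the
quotient uniformly in `n`; letting `n → ∞` gives `(g^m)' ≥ ε > 0` on `D` for all `m`. An
increasing self-map of `D` with uniformly expanding iterates is the identity, and every point
of `(a, b)` is carried into such a domain by some `f^n`.
-/

open Set

/-- `f` is an orientation-preserving `C^n` diffeomorphism of the set `s ⊆ ℝ`
onto itself: it maps `s` bijectively onto `s`, is `C^n` on `s`, and has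
everywhere positive derivative on `s`. -/
def IsDiffeoOn (n : WithTop ℕ∞) (s : Set ℝ) (f : ℝ → ℝ) : Prop :=
  Set.InjOn f s ∧ f '' s = s ∧ ContDiffOn ℝ n f s ∧ ∀ x ∈ s, 0 < derivWithin f s x

open Filter Topology Function

section

variable {a b : ℝ}

lemma StrictMonoOn.continuousOn_of_image_Ico_eq {ψ : ℝ → ℝ} (hψ : StrictMonoOn ψ (Ico a b))
    (himg : ψ '' Ico a b = Ico a b) : ContinuousOn ψ (Ico a b) := by
  intro y hy
  have hψy : ψ y ∈ Ico a b := himg ▸ mem_image_of_mem ψ hy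
  rcases hy.1.eq_or_lt with rfl | hay
  · refine (continuousWithinAt_right_of_monotoneOn_of_image_mem_nhdsWithin hψ.monotoneOn
      (Ico_mem_nhdsGE_of_mem hy) ?_).mono Ico_subset_Ici_self
    rw [himg]
    exact Ico_mem_nhdsGE_of_mem hψy
  · have ha : a ∈ Ico a b := ⟨le_rfl, hay.trans hy.2⟩
    have hψa : a < ψ y :=
      ((himg ▸ mem_image_of_mem ψ ha : ψ a ∈ Ico a b).1).trans_lt (hψ ha hy hay)
    refine (continuousAt_of_monotoneOn_of_image_mem_nhds hψ.monotoneOn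
      (Ico_mem_nhds hay hy.2) ?_).continuousWithinAt
    rw [himg]
    exact Ico_mem_nhds hψa hψy.2

lemma isDiffeoOn_id {n : WithTop ℕ∞} {s : Set ℝ} (hs : UniqueDiffOn ℝ s) : IsDiffeoOn n s id :=
  ⟨injOn_id s, image_id s, contDiffOn_id, fun x hx => by
    rw [derivWithin_id _ _ (hs x hx)]; exact one_pos⟩

namespace IsDiffeoOn

variable {n : WithTop ℕ∞} {s : Set ℝ} {φ ψ : ℝ → ℝ}

lemma differentiableOn (hφ : IsDiffeoOn n s φ) : DifferentiableOn ℝ φ s :=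
  fun x hx => differentiableWithinAt_of_derivWithin_ne_zero (hφ.2.2.2 x hx).ne'

lemma continuousOn (hφ : IsDiffeoOn n s φ) : ContinuousOn φ s :=
  hφ.differentiableOn.continuousOn

lemma mapsTo (hφ : IsDiffeoOn n s φ) : MapsTo φ s s := by
  simpa only [hφ.2.1] using mapsTo_image φ s

lemma bijOn (hφ : IsDiffeoOn n s φ) : BijOn φ s s := by
  simpa only [hφ.2.1] using hφ.1.bijOn_image

lemma strictMonoOn (hφ : IsDiffeoOn n s φ) (hs : Convex ℝ s) : StrictMonoOn φ s :=
  strictMonoOn_of_deriv_pos hs hφ.continuousOn fun x hx => by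
    rw [← derivWithin_of_mem_nhds (mem_interior_iff_mem_nhds.1 hx)]
    exact hφ.2.2.2 x (interior_subset hx)

lemma mapsTo_Icc (hφ : IsDiffeoOn n s φ) (hs : Convex ℝ s) {c d : ℝ} (hcd : Icc c d ⊆ s)
    (hc : φ c = c) (hd : φ d = d) : MapsTo φ (Icc c d) (Icc c d) := by
  simpa only [hc, hd] using ((hφ.strictMonoOn hs).monotoneOn.mono hcd).mapsTo_Icc

lemma derivWithin_comp (hφ : IsDiffeoOn n s φ) (hψ : IsDiffeoOn n s ψ) {x : ℝ} (hx : x ∈ s) :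
    derivWithin (φ ∘ ψ) s x = derivWithin φ s (ψ x) * derivWithin ψ s x :=
  _root_.derivWithin_comp x (hφ.differentiableOn _ (hψ.mapsTo hx)) (hψ.differentiableOn x hx)
    hψ.mapsTo

lemma comp (hφ : IsDiffeoOn n s φ) (hψ : IsDiffeoOn n s ψ) : IsDiffeoOn n s (φ ∘ ψ) :=
  ⟨hφ.1.comp hψ.1 hψ.mapsTo, by rw [image_comp, hψ.2.1, hφ.2.1],
    hφ.2.2.1.comp hψ.2.2.1 hψ.mapsTo, fun x hx => by
      rw [hφ.derivWithin_comp hψ hx]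
      exact mul_pos (hφ.2.2.2 _ (hψ.mapsTo hx)) (hψ.2.2.2 x hx)⟩

lemma iterate (hφ : IsDiffeoOn n s φ) (hs : UniqueDiffOn ℝ s) (m : ℕ) :
    IsDiffeoOn n s (φ^[m]) := by
  induction m with
  | zero => exact isDiffeoOn_id hs
  | succ m ih => rw [iterate_succ']; exact hφ.comp ih

lemma derivWithin_iterate (hφ : IsDiffeoOn n s φ) (hs : UniqueDiffOn ℝ s) (m : ℕ) {x : ℝ}
    (hx : x ∈ s) : derivWithin (φ^[m]) s x = ∏ j ∈ Finset.range m, derivWithin φ s (φ^[j] x) := by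
  induction m with
  | zero => simp [derivWithin_id _ _ (hs x hx)]
  | succ m ih =>
    rw [iterate_succ', hφ.derivWithin_comp (hφ.iterate hs m) hx, ih, Finset.prod_range_succ,
      mul_comm]

lemma derivWithin_mul_comm_of_commute (hφ : IsDiffeoOn n s φ) (hψ : IsDiffeoOn n s ψ)
    (hcomm : ∀ x ∈ s, φ (ψ x) = ψ (φ x)) {x : ℝ} (hx : x ∈ s) :
    derivWithin φ s (ψ x) * derivWithin ψ s x = derivWithin ψ s (φ x) * derivWithin φ s x := by
  rw [← hφ.derivWithin_comp hψ hx, ← hψ.derivWithin_comp hφ hx]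
  exact derivWithin_congr (fun y hy => hcomm y hy) (hcomm x hx)

lemma exists_lipschitzOnWith_log_derivWithin {t : Set ℝ} (hφ : IsDiffeoOn n s φ) (hn : 2 ≤ n)
    (hs : UniqueDiffOn ℝ s) (hts : t ⊆ s) (ht : Convex ℝ t) (ht' : IsCompact t) :
    ∃ K, LipschitzOnWith K (fun x => Real.log (derivWithin φ s x)) t :=
  (((hφ.2.2.1.derivWithin hs (by rwa [one_add_one_eq_two])).log fun x hx =>
    (hφ.2.2.2 x hx).ne').mono hts).exists_lipschitzOnWith one_ne_zero ht ht'

lemma derivWithin_iterate_le_exp_mul {t : Set ℝ} (hφ : IsDiffeoOn n s φ) (hs : UniqueDiffOn ℝ s)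
    {K : NNReal} (hK : LipschitzOnWith K (fun x => Real.log (derivWithin φ s x)) t) {m : ℕ}
    {u v : ℝ} (hu : u ∈ s) (hv : v ∈ s) (hut : ∀ j < m, φ^[j] u ∈ t)
    (hvt : ∀ j < m, φ^[j] v ∈ t) :
    derivWithin (φ^[m]) s u ≤
      Real.exp (K * ∑ j ∈ Finset.range m, |φ^[j] u - φ^[j] v|) * derivWithin (φ^[m]) s v := by
  have hpos : ∀ x ∈ s, 0 < derivWithin (φ^[m]) s x := (hφ.iterate hs m).2.2.2
  rw [← Real.log_le_log_iff (hpos u hu) (by positivity [hpos v hv]),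
    Real.log_mul (Real.exp_ne_zero _) (hpos v hv).ne', Real.log_exp, ← sub_le_iff_le_add,
    hφ.derivWithin_iterate hs m hu, hφ.derivWithin_iterate hs m hv,
    Real.log_prod fun j _ => (hφ.2.2.2 _ ((hφ.mapsTo.iterate j) hu)).ne',
    Real.log_prod fun j _ => (hφ.2.2.2 _ ((hφ.mapsTo.iterate j) hv)).ne',
    ← Finset.sum_sub_distrib, Finset.mul_sum]
  refine Finset.sum_le_sum fun j hj => ?_
  have hj := Finset.mem_range.1 hj
  have := hK.dist_le_mul _ (hut j hj) _ (hvt j hj)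
  rw [Real.dist_eq, Real.dist_eq] at this
  exact (le_abs_self _).trans this

lemma map_left (hab : a < b) (hφ : IsDiffeoOn n (Ico a b) φ) : φ a = a := by
  have ha : a ∈ Ico a b := left_mem_Ico.2 hab
  obtain ⟨y, hy, hya⟩ := hφ.bijOn.surjOn ha
  refine le_antisymm ?_ (hφ.mapsTo ha).1
  exact hya ▸ (hφ.strictMonoOn (convex_Ico a b)).monotoneOn ha hy hy.1

lemma mapsTo_Ioo (hab : a < b) (hφ : IsDiffeoOn n (Ico a b) φ) :
    MapsTo φ (Ioo a b) (Ioo a b) :=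
  fun _ hx => ⟨hφ.map_left hab ▸ hφ.strictMonoOn (convex_Ico a b) (left_mem_Ico.2 hab)
    (Ioo_subset_Ico_self hx) hx.1, (hφ.mapsTo (Ioo_subset_Ico_self hx)).2⟩

lemma invFunOn {n : ℕ} (hφ : IsDiffeoOn n (Ico a b) φ) :
    IsDiffeoOn n (Ico a b) (invFunOn φ (Ico a b)) := by
  set s := Ico a b
  set ψ := Function.invFunOn φ s
  have hinv : InvOn ψ φ s s := hφ.bijOn.invOn_invFunOn
  have hψs : MapsTo ψ s s := hφ.bijOn.surjOn.mapsTo_invFunOn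
  have hψ : BijOn ψ s s := hinv.symm.bijOn hψs hφ.mapsTo
  have hmono : StrictMonoOn ψ s := fun y₁ hy₁ y₂ hy₂ h => by
    rwa [← (hφ.strictMonoOn (convex_Ico a b)).lt_iff_lt (hψs hy₁) (hψs hy₂), hinv.2 hy₁,
      hinv.2 hy₂]
  have hcont : ContinuousOn ψ s := hmono.continuousOn_of_image_Ico_eq hψ.image_eq
  have hderiv : ∀ y ∈ s, HasDerivWithinAt ψ (derivWithin φ s (ψ y))⁻¹ s y := fun y hy =>
    HasFDerivWithinAt.of_local_left_inverse
      (f' := ContinuousLinearEquiv.unitsEquivAut ℝ (Units.mk0 _ (hφ.2.2.2 _ (hψs hy)).ne'))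
      ((hcont y hy).tendsto_nhdsWithin hψs)
      (hφ.differentiableOn _ (hψs hy)).hasDerivWithinAt hy
      (eventually_nhdsWithin_of_forall fun z hz => hinv.2 hz)
  have hderiv_eq : EqOn (derivWithin ψ s) (fun y => (derivWithin φ s (ψ y))⁻¹) s :=
    fun y hy => (hderiv y hy).derivWithin (uniqueDiffOn_Ico a b y hy)
  -- bootstrap: if `ψ` is `C^k` then so is `ψ' = (φ' ∘ ψ)⁻¹`, hence `ψ` is `C^(k+1)`
  have hcontDiff : ∀ k : ℕ, k ≤ n → ContDiffOn ℝ k ψ s := by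
    intro k
    induction k with
    | zero => intro _; exact contDiffOn_zero.2 hcont
    | succ k ih =>
      intro hk
      rw [Nat.cast_succ, contDiffOn_succ_iff_derivWithin (uniqueDiffOn_Ico a b)]
      refine ⟨fun y hy => (hderiv y hy).differentiableWithinAt, by simp, ?_⟩
      refine ContDiffOn.congr ?_ hderiv_eq
      exact ((hφ.2.2.1.derivWithin (uniqueDiffOn_Ico a b) (by exact_mod_cast hk)).comp
        (ih (by omega)) hψs).inv fun y hy => (hφ.2.2.2 _ (hψs hy)).ne'
  refine ⟨hψ.injOn, hψ.image_eq, hcontDiff n le_rfl, fun y hy => ?_⟩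
  rw [hderiv_eq hy]
  exact inv_pos.2 (hφ.2.2.2 _ (hψs hy))

end IsDiffeoOn

lemma comm_iterate_of_comm_on {α : Type*} {s : Set α} {f g : α → α} (hg : MapsTo g s s)
    (h : ∀ x ∈ s, f (g x) = g (f x)) (m : ℕ) : ∀ x ∈ s, f (g^[m] x) = g^[m] (f x) := by
  induction m with
  | zero => exact fun _ _ => rfl
  | succ m ih => intro x hx; rw [iterate_succ_apply, iterate_succ_apply, ih _ (hg hx), h x hx]

lemma iterate_comm_iterate_of_comm_on {α : Type*} {s : Set α} {f g : α → α}
    (hf : MapsTo f s s) (hg : MapsTo g s s) (h : ∀ x ∈ s, f (g x) = g (f x)) (k m : ℕ) :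
    ∀ x ∈ s, f^[k] (g^[m] x) = g^[m] (f^[k] x) := fun x hx =>
  (comm_iterate_of_comm_on hf (fun y hy => (comm_iterate_of_comm_on hg h m y hy).symm) k x
    hx).symm

lemma invFunOn_comm_of_comm_on {α : Type*} [Nonempty α] {s : Set α} {f g : α → α}
    (hf : BijOn f s s) (hg : MapsTo g s s) (h : ∀ x ∈ s, f (g x) = g (f x)) :
    ∀ x ∈ s, invFunOn f s (g x) = g (invFunOn f s x) := by
  intro x hx
  have hinv := hf.invOn_invFunOn
  have hx' := hf.surjOn.mapsTo_invFunOn hx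
  calc invFunOn f s (g x) = invFunOn f s (f (g (invFunOn f s x))) := by
        rw [h _ hx', hinv.2 hx]
    _ = g (invFunOn f s x) := hinv.1 (hg hx')

lemma ContinuousOn.forall_lt_or_forall_gt_of_forall_ne {α : Type*} [TopologicalSpace α]
    [LinearOrder α] [OrderClosedTopology α] {s : Set α} {f : α → α} (hf : ContinuousOn f s)
    (hs : IsPreconnected s) (h : ∀ x ∈ s, f x ≠ x) :
    (∀ x ∈ s, f x < x) ∨ ∀ x ∈ s, x < f x := by
  by_contra! hcon
  obtain ⟨⟨x, hx, hxf⟩, ⟨y, hy, hyf⟩⟩ := hcon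
  obtain ⟨z, hz, hfz⟩ := hs.intermediate_value₂ hy hx hf continuousOn_id hyf hxf
  exact h z hz hfz

lemma tendsto_iterate_of_lt {φ : ℝ → ℝ} (hφ : ContinuousOn φ (Ico a b))
    (hmaps : MapsTo φ (Ioo a b) (Ioo a b)) (hlt : ∀ x ∈ Ioo a b, φ x < x) {y : ℝ}
    (hy : y ∈ Ioo a b) : Tendsto (fun k => φ^[k] y) atTop (𝓝 a) := by
  have hmem : ∀ k, φ^[k] y ∈ Ioo a b := fun k => hmaps.iterate k hy
  have hanti : Antitone fun k => φ^[k] y := antitone_nat_of_succ_le fun k => by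
    rw [iterate_succ_apply']; exact (hlt _ (hmem k)).le
  have hbdd : BddBelow (range fun k => φ^[k] y) :=
    ⟨a, by rintro _ ⟨k, rfl⟩; exact (hmem k).1.le⟩
  have hlim := tendsto_atTop_ciInf hanti hbdd
  rcases (le_ciInf fun k => (hmem k).1.le : a ≤ ⨅ k, φ^[k] y).eq_or_lt with h | h
  · rwa [← h] at hlim
  · have hL : ⨅ k, φ^[k] y ∈ Ioo a b := ⟨h, (ciInf_le hbdd 0).trans_lt (hmem 0).2⟩
    exact absurd (isFixedPt_of_tendsto_iterate hlim (hφ.continuousAt (Ico_mem_nhds hL.1 hL.2)))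
      (hlt _ hL).ne

lemma HasDerivWithinAt.eq_one_of_frequently_fixed {φ : ℝ → ℝ} {φ' x : ℝ} {s : Set ℝ}
    (h : HasDerivWithinAt φ φ' s x) (hx : φ x = x) (hfix : ∃ᶠ y in 𝓝[s \ {x}] x, φ y = y) :
    φ' = 1 := by
  refine tendsto_nhds_unique_of_frequently_eq (hasDerivWithinAt_iff_tendsto_slope.1 h)
    tendsto_const_nhds ((hfix.and_eventually self_mem_nhdsWithin).mono fun y hy => ?_)
  rw [slope_def_field, hy.1, hx, div_self (sub_ne_zero.2 hy.2.2)]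

lemma exists_mem_Ico_of_tendsto {x : ℕ → ℝ} {w : ℝ} (hlim : Tendsto x atTop (𝓝 a))
    (haw : a < w) (hw : w < x 0) : ∃ k, w ∈ Ico (x (k + 1)) (x k) := by
  classical
  have hex : ∃ k, x k ≤ w := (hlim.eventually_lt_const haw).exists.imp fun _ h => h.le
  obtain ⟨k, hk⟩ : ∃ k, Nat.find hex = k + 1 :=
    Nat.exists_eq_succ_of_ne_zero fun h => (h ▸ Nat.find_spec hex).not_gt hw
  exact ⟨k, hk ▸ Nat.find_spec hex, not_le.1 (Nat.find_min hex (by omega))⟩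

lemma exists_lt_of_le_sub_succ {t : ℕ → ℝ} {δ : ℝ} (hδ : 0 < δ)
    (ht : ∀ m, δ ≤ t m - t (m + 1)) (B : ℝ) : ∃ N, t N < B := by
  have hdec : ∀ N : ℕ, t N ≤ t 0 - N * δ := by
    intro N
    induction N with
    | zero => simp
    | succ N ih => push_cast; linarith [ht N]
  obtain ⟨N, hN⟩ := exists_nat_gt ((t 0 - B) / δ)
  refine ⟨N, (hdec N).trans_lt ?_⟩
  rw [div_lt_iff₀ hδ] at hN
  linarith

/-- The orbit of a moved point would drift monotonically by at least `ε * |g w - w|` per step. -/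
lemma eqOn_id_of_mul_sub_le_iterate_sub {g : ℝ → ℝ} {c d ε : ℝ}
    (hmaps : MapsTo g (Icc c d) (Icc c d)) (hε : 0 < ε)
    (hexp : ∀ m : ℕ, ∀ u ∈ Icc c d, ∀ v ∈ Icc c d, u ≤ v → ε * (v - u) ≤ g^[m] v - g^[m] u) :
    EqOn g id (Icc c d) := by
  intro w hw
  rw [id_eq]
  by_contra hne
  have horbit : ∀ m, g^[m] w ∈ Icc c d := fun m => hmaps.iterate m hw
  rcases lt_or_gt_of_ne hne with hlt | hgt
  · obtain ⟨N, hN⟩ := exists_lt_of_le_sub_succ (t := fun m => g^[m] w)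
      (mul_pos hε (sub_pos.2 hlt))
      (fun m => by simpa only [iterate_succ_apply] using hexp m _ (hmaps hw) w hw hlt.le) c
    exact hN.not_ge (horbit N).1
  · obtain ⟨N, hN⟩ := exists_lt_of_le_sub_succ (t := fun m => -g^[m] w)
      (mul_pos hε (sub_pos.2 hgt))
      (fun m => by
        have := hexp m w hw _ (hmaps hw) hgt.le
        rw [iterate_succ_apply]
        linarith) (-d)
    exact hN.not_ge (neg_le_neg (horbit N).2)

lemma mul_sub_le_sub_of_le_derivWithin {φ : ℝ → ℝ} {s : Set ℝ} (hφ : DifferentiableOn ℝ φ s)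
    {c d ε : ℝ} (hcd : Icc c d ⊆ s) (hε : ∀ z ∈ Icc c d, ε ≤ derivWithin φ s z) :
    ∀ u ∈ Icc c d, ∀ v ∈ Icc c d, u ≤ v → ε * (v - u) ≤ φ v - φ u := by
  have hnhds : ∀ z ∈ interior (Icc c d), s ∈ 𝓝 z := fun z hz =>
    mem_of_superset (mem_interior_iff_mem_nhds.1 hz) hcd
  refine (convex_Icc c d).mul_sub_le_image_sub_of_le_deriv (hφ.continuousOn.mono hcd)
    (fun z hz => ((hφ z (mem_of_mem_nhds (hnhds z hz))).differentiableAt (hnhds z hz))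
      |>.differentiableWithinAt) fun z hz => ?_
  rw [← derivWithin_of_mem_nhds (hnhds z hz)]
  exact hε z (interior_subset hz)

variable {f g : ℝ → ℝ}

lemma exists_derivWithin_iterate_le_exp_mul (hf : IsDiffeoOn 2 (Ico a b) f) {x₀ : ℝ}
    (hx₀ : x₀ ∈ Ico a b) (hfx₀ : f x₀ ≤ x₀) :
    ∃ V, ∀ m : ℕ, ∀ u ∈ Icc (f x₀) x₀, ∀ v ∈ Icc (f x₀) x₀,
      derivWithin (f^[m]) (Ico a b) u ≤ Real.exp V * derivWithin (f^[m]) (Ico a b) v := by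
  have hs := uniqueDiffOn_Ico a b
  have hD : Icc (f x₀) x₀ ⊆ Ico a b := Icc_subset_Ico (hf.mapsTo hx₀).1 hx₀.2
  obtain ⟨K, hK⟩ := hf.exists_lipschitzOnWith_log_derivWithin le_rfl hs
    (Icc_subset_Ico_right hx₀.2) (convex_Icc a x₀) isCompact_Icc
  have hdom : ∀ j : ℕ, ∀ z ∈ Icc (f x₀) x₀, f^[j] z ∈ Icc (f^[j + 1] x₀) (f^[j] x₀) := by
    intro j z hz
    rw [iterate_succ_apply]
    exact (((hf.iterate hs j).strictMonoOn (convex_Ico a b)).monotoneOn.mono hD).mapsTo_Icc hz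
  have hanti : Antitone fun j => f^[j] x₀ :=
    antitone_nat_of_succ_le fun j => (hdom j x₀ ⟨hfx₀, le_rfl⟩).1
  have horbit : ∀ j, ∀ z ∈ Icc (f x₀) x₀, f^[j] z ∈ Icc a x₀ := fun j z hz =>
    ⟨((hf.iterate hs j).mapsTo (hD hz)).1, (hdom j z hz).2.trans (hanti j.zero_le)⟩
  refine ⟨K * (x₀ - a), fun m u hu v hv => ?_⟩
  have hsum : ∑ j ∈ Finset.range m, |f^[j] u - f^[j] v| ≤ x₀ - a := calc
    _ ≤ ∑ j ∈ Finset.range m, (f^[j] x₀ - f^[j + 1] x₀) := Finset.sum_le_sum fun j _ =>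
        Real.dist_le_of_mem_Icc (hdom j u hu) (hdom j v hv)
    _ = x₀ - f^[m] x₀ := Finset.sum_range_sub' (fun j => f^[j] x₀) m
    _ ≤ x₀ - a := by linarith [((hf.iterate hs m).mapsTo hx₀).1]
  calc derivWithin (f^[m]) (Ico a b) u
      ≤ Real.exp (K * ∑ j ∈ Finset.range m, |f^[j] u - f^[j] v|) *
          derivWithin (f^[m]) (Ico a b) v :=
        hf.derivWithin_iterate_le_exp_mul hs hK (hD hu) (hD hv) (fun j _ => horbit j u hu)
          (fun j _ => horbit j v hv)
    _ ≤ Real.exp (K * (x₀ - a)) * derivWithin (f^[m]) (Ico a b) v := by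
        have := ((hf.iterate hs m).2.2.2 v (hD hv)).le
        gcongr

lemma exists_pos_le_derivWithin_iterate (hab : a < b) (hf : IsDiffeoOn 2 (Ico a b) f)
    (hg : IsDiffeoOn 2 (Ico a b) g) (hcomm : ∀ x ∈ Ico a b, f (g x) = g (f x))
    (hflt : ∀ x ∈ Ioo a b, f x < x) (hg' : derivWithin g (Ico a b) a = 1) {x₀ : ℝ}
    (hx₀ : x₀ ∈ Ioo a b) (hgD : MapsTo g (Icc (f x₀) x₀) (Icc (f x₀) x₀)) :
    ∃ ε > 0, ∀ m : ℕ, ∀ z ∈ Icc (f x₀) x₀, ε ≤ derivWithin (g^[m]) (Ico a b) z := by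
  have hs := uniqueDiffOn_Ico a b
  have ha : a ∈ Ico a b := left_mem_Ico.2 hab
  have hD : Icc (f x₀) x₀ ⊆ Ioo a b := Icc_subset_Ioo (hf.mapsTo_Ioo hab hx₀).1 hx₀.2
  obtain ⟨V, hV⟩ := exists_derivWithin_iterate_le_exp_mul hf (Ioo_subset_Ico_self hx₀)
    (hflt x₀ hx₀).le
  refine ⟨Real.exp (-V), Real.exp_pos _, fun m z hz => ?_⟩
  have hzs : z ∈ Ico a b := Ioo_subset_Ico_self (hD hz)
  have hgm := hg.iterate hs m
  have hlim : Tendsto (fun n => derivWithin (g^[m]) (Ico a b) (f^[n] z)) atTop (𝓝 1) := by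
    have hgm' : derivWithin (g^[m]) (Ico a b) a = 1 := by
      have hga : HasDerivWithinAt g 1 (Ico a b) a :=
        hg' ▸ (hg.differentiableOn a ha).hasDerivWithinAt
      have := HasDerivWithinAt.iterate a hga (hg.map_left hab) hg.mapsTo m
      rw [one_pow] at this
      exact this.derivWithin (hs a ha)
    have hcont := (hgm.2.2.1.continuousOn_derivWithin hs (by norm_num) a ha).tendsto
    rw [hgm'] at hcont
    exact hcont.comp (tendsto_nhdsWithin_iff.2
      ⟨tendsto_iterate_of_lt hf.continuousOn (hf.mapsTo_Ioo hab) hflt (hD hz),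
        Eventually.of_forall fun n => (hf.iterate hs n).mapsTo hzs⟩)
  have hstep : ∀ n, Real.exp (-V) * derivWithin (g^[m]) (Ico a b) (f^[n] z) ≤
      derivWithin (g^[m]) (Ico a b) z := by
    intro n
    have hfn := hf.iterate hs n
    have hid := hfn.derivWithin_mul_comm_of_commute hgm
      (iterate_comm_iterate_of_comm_on hf.mapsTo hg.mapsTo hcomm n m) hzs
    have hdist := hV n _ ((hgD.iterate m) hz) z hz
    rw [Real.exp_neg, inv_mul_le_iff₀ (Real.exp_pos V)]
    refine le_of_mul_le_mul_right ?_ (hfn.2.2.2 z hzs)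
    calc derivWithin (g^[m]) (Ico a b) (f^[n] z) * derivWithin (f^[n]) (Ico a b) z
        = derivWithin (f^[n]) (Ico a b) (g^[m] z) * derivWithin (g^[m]) (Ico a b) z := hid.symm
      _ ≤ Real.exp V * derivWithin (f^[n]) (Ico a b) z * derivWithin (g^[m]) (Ico a b) z :=
          mul_le_mul_of_nonneg_right hdist (hgm.2.2.2 z hzs).le
      _ = Real.exp V * derivWithin (g^[m]) (Ico a b) z * derivWithin (f^[n]) (Ico a b) z := by
          ring
  simpa using le_of_tendsto (hlim.const_mul (Real.exp (-V))) (Eventually.of_forall hstep)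

lemma derivWithin_left_eq_one_of_commute_of_lt (hab : a < b) (hf : IsDiffeoOn 2 (Ico a b) f)
    (hg : IsDiffeoOn 2 (Ico a b) g) (hcomm : ∀ x ∈ Ico a b, f (g x) = g (f x))
    (hflt : ∀ x ∈ Ioo a b, f x < x) {x₀ : ℝ} (hx₀ : x₀ ∈ Ioo a b) (hgx₀ : g x₀ = x₀) :
    derivWithin g (Ico a b) a = 1 := by
  have horbit : ∀ k, f^[k] x₀ ∈ Ico a b \ {a} := fun k =>
    have h := (hf.mapsTo_Ioo hab).iterate k hx₀
    ⟨Ioo_subset_Ico_self h, h.1.ne'⟩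
  have hgorbit : ∀ k, g (f^[k] x₀) = f^[k] x₀ := fun k => by
    rw [comm_iterate_of_comm_on hf.mapsTo (fun x hx => (hcomm x hx).symm) k x₀
      (Ioo_subset_Ico_self hx₀), hgx₀]
  have hlim := tendsto_iterate_of_lt hf.continuousOn (hf.mapsTo_Ioo hab) hflt hx₀
  exact (hg.differentiableOn a (left_mem_Ico.2 hab)).hasDerivWithinAt.eq_one_of_frequently_fixed
    (hg.map_left hab) ((tendsto_nhdsWithin_iff.2 ⟨hlim, Eventually.of_forall horbit⟩).frequently
      (Frequently.of_forall hgorbit))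

lemma eqOn_id_Icc_of_commute_of_lt (hab : a < b) (hf : IsDiffeoOn 2 (Ico a b) f)
    (hg : IsDiffeoOn 2 (Ico a b) g) (hcomm : ∀ x ∈ Ico a b, f (g x) = g (f x))
    (hflt : ∀ x ∈ Ioo a b, f x < x) {x₀ : ℝ} (hx₀ : x₀ ∈ Ioo a b) (hgx₀ : g x₀ = x₀) :
    EqOn g id (Icc (f x₀) x₀) := by
  have hD : Icc (f x₀) x₀ ⊆ Ico a b :=
    Icc_subset_Ico (hf.mapsTo (Ioo_subset_Ico_self hx₀)).1 hx₀.2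
  have hgD : MapsTo g (Icc (f x₀) x₀) (Icc (f x₀) x₀) :=
    hg.mapsTo_Icc (convex_Ico a b) hD (by rw [← hcomm x₀ (Ioo_subset_Ico_self hx₀), hgx₀]) hgx₀
  obtain ⟨ε, hε, hbound⟩ := exists_pos_le_derivWithin_iterate hab hf hg hcomm hflt
    (derivWithin_left_eq_one_of_commute_of_lt hab hf hg hcomm hflt hx₀ hgx₀) hx₀ hgD
  exact eqOn_id_of_mul_sub_le_iterate_sub hgD hε fun m =>
    mul_sub_le_sub_of_le_derivWithin ((hg.iterate (uniqueDiffOn_Ico a b) m).differentiableOn) hD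
      (hbound m)

theorem eqOn_id_of_commute_of_lt (hab : a < b) (hf : IsDiffeoOn 2 (Ico a b) f)
    (hg : IsDiffeoOn 2 (Ico a b) g) (hcomm : ∀ x ∈ Ico a b, f (g x) = g (f x))
    (hflt : ∀ x ∈ Ioo a b, f x < x) (hg_fix : ∃ x ∈ Ioo a b, g x = x) :
    EqOn g id (Ico a b) := by
  obtain ⟨p, hp, hgp⟩ := hg_fix
  have hcomm_f : ∀ k, ∀ x ∈ Ico a b, g (f^[k] x) = f^[k] (g x) :=
    comm_iterate_of_comm_on hf.mapsTo fun x hx => (hcomm x hx).symm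
  have horbit : ∀ k, f^[k] p ∈ Ioo a b := fun k => (hf.mapsTo_Ioo hab).iterate k hp
  intro y hy
  rw [id_eq]
  by_contra hgy
  have hy' : y ∈ Ioo a b := ⟨hy.1.lt_of_ne fun h => hgy (h ▸ hg.map_left hab), hy.2⟩
  -- move `y` into a fundamental domain `[f x₀, x₀]` with `x₀` on the `f`-orbit of `p`
  obtain ⟨n, hn⟩ := ((tendsto_iterate_of_lt hf.continuousOn (hf.mapsTo_Ioo hab) hflt hy'
    ).eventually_lt_const hp.1).exists
  obtain ⟨k, hk⟩ := exists_mem_Ico_of_tendsto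
    (tendsto_iterate_of_lt hf.continuousOn (hf.mapsTo_Ioo hab) hflt hp)
    ((hf.mapsTo_Ioo hab).iterate n hy').1 hn
  rw [iterate_succ_apply'] at hk
  have hfix := eqOn_id_Icc_of_commute_of_lt hab hf hg hcomm hflt (horbit k)
    (by rw [hcomm_f k p (Ioo_subset_Ico_self hp), hgp]) (Ico_subset_Icc_self hk)
  rw [id_eq, hcomm_f n y hy] at hfix
  exact hgy ((hf.iterate (uniqueDiffOn_Ico a b) n).1 (hg.mapsTo hy) hy hfix)

end

/-- **Kopell's Lemma.** Suppose `f` and `g` are commuting orientation-preserving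
`C²` diffeomorphisms of the half-open interval `[a,b)`.  If `f` has no fixed
point in `(a,b)` and `g` has a fixed point in `(a,b)`, then `g` is the
identity. -/
theorem kopell_lemma {a b : ℝ} (hab : a < b) (f g : ℝ → ℝ)
    (hf : IsDiffeoOn 2 (Ico a b) f) (hg : IsDiffeoOn 2 (Ico a b) g)
    (hcomm : ∀ x ∈ Ico a b, f (g x) = g (f x))
    (hf_nofix : ∀ x ∈ Ioo a b, f x ≠ x)
    (hg_fix : ∃ x ∈ Ioo a b, g x = x) :
    ∀ x ∈ Ico a b, g x = x := by
  rcases (hf.continuousOn.mono Ioo_subset_Ico_self).forall_lt_or_forall_gt_of_forall_ne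
    isPreconnected_Ioo hf_nofix with hlt | hgt
  · exact fun x hx => eqOn_id_of_commute_of_lt hab hf hg hcomm hlt hg_fix hx
  · have hf' : IsDiffeoOn 2 (Ico a b) (invFunOn f (Ico a b)) := hf.invFunOn (n := 2)
    have hf'lt : ∀ x ∈ Ioo a b, invFunOn f (Ico a b) x < x := fun x hx => by
      have := hgt _ (hf'.mapsTo_Ioo hab hx)
      rwa [hf.bijOn.invOn_invFunOn.2 (Ioo_subset_Ico_self hx)] at this
    exact fun x hx => eqOn_id_of_commute_of_lt hab hf' hg
      (invFunOn_comm_of_comm_on hf.bijOn hg.mapsTo hcomm) hf'lt hg_fix hx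
end

section
/- Suppose f and g are commuting orientation-preserving C² diffeomorphisms of the real line ℝ, each of which has at least one fixed point. Then f maps each connected component of Fix(g) onto itself, and the frontier ∂Fix(g) = Fix(g) \ Int(Fix(g)) is contained in Fix(f); symmetrically, g maps each connected component of Fix(f) onto itself and ∂Fix(f) ⊆ Fix(g). -/
/-- `f` is an orientation-preserving `C^n` diffeomorphism of `ℝ`: a `C^n`
bijection of `ℝ` with everywhere positive derivative (its inverse is then
automatically `C^n`). -/
def IsDiffeoR (n : WithTop ℕ∞) (f : ℝ → ℝ) : Prop :=
  Function.Bijective f ∧ ContDiff ℝ n f ∧ ∀ x : ℝ, 0 < deriv f x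

/-!
Kopell's lemma: if a `C²` map `f` fixes `b` and pushes `[p, b)` towards `b`, then a `C¹`
map `g` commuting with `f` and fixing `p` is the identity on the fundamental domain `[p, f p]`.
Indeed, `f` has bounded distortion on `[p, b]`, so the chain rule for `f^n ∘ g^k = g^k ∘ f^n`
and `(g^k)' b = 1` give `(g^k)' ≥ 1 / K` on `[p, f p]` for all `k`; but an orbit of `g` in
`[p, f p]` converges, so `g^k (g x) - g^k x → 0`.

Hence a fixed point `a` of `g` that `f` moves lies in the interior of `Fix g`: after replacing
`f` by `f⁻¹` and conjugating by `x ↦ -x` if necessary, `f` pushes `a` towards the nearest fixed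
point of `f`, and then `[f⁻¹ a, f a] ⊆ Fix g`. So `∂ Fix g ⊆ Fix f`. For `y ∈ Fix g` the
segment between `y` and `f y` then misses `∂ Fix g` (unless `f y = y`), hence lies in `Fix g`,
which is why `f` maps each component of `Fix g` onto itself.
-/

open Set Filter Topology Function

namespace IsDiffeoR

variable {n : WithTop ℕ∞} {f : ℝ → ℝ}

lemma strictMono (hf : IsDiffeoR n f) : StrictMono f :=
  strictMono_of_deriv_pos hf.2.2

lemma differentiable (hf : IsDiffeoR n f) : Differentiable ℝ f :=
  fun x => differentiableAt_of_deriv_ne_zero (hf.2.2 x).ne'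

lemma invFun (hf : IsDiffeoR n f) : IsDiffeoR n (Function.invFun f) := by
  set e : ℝ ≃ₜ ℝ := (hf.strictMono.orderIsoOfSurjective f hf.1.2).toHomeomorph
  have he : ⇑e.symm = Function.invFun f := funext fun y =>
    hf.1.1 <| (e.apply_symm_apply y).trans (rightInverse_invFun hf.1.2 y).symm
  have hf' : ∀ x, HasDerivAt f (deriv f x) x := fun x => (hf.differentiable x).hasDerivAt
  rw [← he]
  refine ⟨e.symm.bijective, e.contDiff_symm_deriv (fun x => (hf.2.2 x).ne') hf' hf.2.1,
    fun y => ?_⟩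
  rw [(HasDerivAt.of_local_left_inverse e.symm.continuous.continuousAt (hf' _) (hf.2.2 _).ne'
    (Eventually.of_forall e.apply_symm_apply)).deriv]
  exact inv_pos.2 (hf.2.2 _)

lemma conj_neg (hf : IsDiffeoR n f) : IsDiffeoR n (fun x => -f (-x)) := by
  refine ⟨neg_involutive.bijective.comp (hf.1.comp neg_involutive.bijective),
    (contDiff_neg.comp hf.2.1).comp contDiff_neg, fun x => ?_⟩
  rw [deriv.fun_neg, deriv_comp_neg, neg_neg]
  exact hf.2.2 _

end IsDiffeoR

section Orbits

variable {f : ℝ → ℝ} {p q b x : ℝ}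

lemma exists_tendsto_iterate_of_mapsTo_Icc (hf : Monotone f) (hI : MapsTo f (Icc p q) (Icc p q))
    (hx : x ∈ Icc p q) : ∃ L ∈ Icc p q, Tendsto (fun n => f^[n] x) atTop (𝓝 L) := by
  have horb : ∀ n, f^[n] x ∈ Icc p q := fun n => hI.iterate n hx
  obtain ⟨L, hL⟩ : ∃ L, Tendsto (fun n => f^[n] x) atTop (𝓝 L) := by
    rcases le_total x (f x) with h | h
    · exact ⟨_, tendsto_atTop_ciSup (hf.monotone_iterate_of_le_map h)
        ⟨q, forall_mem_range.2 fun n => (horb n).2⟩⟩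
    · exact ⟨_, tendsto_atTop_ciInf (hf.antitone_iterate_of_map_le h)
        ⟨p, forall_mem_range.2 fun n => (horb n).1⟩⟩
  exact ⟨L, isClosed_Icc.mem_of_tendsto hL (Eventually.of_forall horb), hL⟩

lemma mapsTo_Icc_of_lt_self (hf : Monotone f) (hfb : f b = b) (hlt : ∀ y ∈ Ico p b, y < f y) :
    MapsTo f (Icc p b) (Icc p b) := by
  intro y ⟨hpy, hyb⟩
  refine ⟨?_, hfb ▸ hf hyb⟩
  rcases hyb.lt_or_eq with hyb | rfl
  · exact hpy.trans (hlt y ⟨hpy, hyb⟩).le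
  · exact hfb.symm ▸ hpy

lemma mapsTo_Ico_of_lt_self (hf : StrictMono f) (hfb : f b = b) (hlt : ∀ y ∈ Ico p b, y < f y) :
    MapsTo f (Ico p b) (Ico p b) :=
  fun y hy => ⟨hy.1.trans (hlt y hy).le, hfb ▸ hf hy.2⟩

lemma tendsto_iterate_of_lt_self (hf : Monotone f) (hfc : Continuous f) (hfb : f b = b)
    (hlt : ∀ y ∈ Ico p b, y < f y) (hx : x ∈ Icc p b) :
    Tendsto (fun n => f^[n] x) atTop (𝓝 b) := by
  obtain ⟨L, hL, hxL⟩ :=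
    exists_tendsto_iterate_of_mapsTo_Icc hf (mapsTo_Icc_of_lt_self hf hfb hlt) hx
  have hfL : f L = L := isFixedPt_of_tendsto_iterate hxL hfc.continuousAt
  rcases hL.2.lt_or_eq with hLb | rfl
  · exact absurd hfL (hlt L ⟨hL.1, hLb⟩).ne'
  · exact hxL

end Orbits

section IterateDeriv

protected lemma ContDiff.iterate {𝕜 E : Type*} [NontriviallyNormedField 𝕜]
    [NormedAddCommGroup E] [NormedSpace 𝕜 E] {n : WithTop ℕ∞} {f : E → E}
    (hf : ContDiff 𝕜 n f) (k : ℕ) :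
    ContDiff 𝕜 n f^[k] := by
  induction k with
  | zero => exact contDiff_id
  | succ k ih => exact ih.comp hf

variable {f : ℝ → ℝ}

lemma deriv_iterate_eq_prod (hf : Differentiable ℝ f) (n : ℕ) (x : ℝ) :
    deriv f^[n] x = ∏ j ∈ Finset.range n, deriv f (f^[j] x) := by
  induction n with
  | zero => simp
  | succ n ih =>
    rw [iterate_succ', deriv_comp x (hf _) ((hf.iterate n) x), ih, Finset.prod_range_succ,
      mul_comm]

lemma deriv_iterate_pos (hf : ∀ x, 0 < deriv f x) (n : ℕ) (x : ℝ) : 0 < deriv f^[n] x := by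
  rw [deriv_iterate_eq_prod (fun x => differentiableAt_of_deriv_ne_zero (hf x).ne')]
  exact Finset.prod_pos fun j _ => hf _

lemma deriv_eq_one_of_tendsto_fixedPoints {g : ℝ → ℝ} {u : ℕ → ℝ} {b : ℝ}
    (hg : DifferentiableAt ℝ g b) (hgb : g b = b) (hu : Tendsto u atTop (𝓝 b))
    (hub : ∀ n, u n ≠ b) (hgu : ∀ n, g (u n) = u n) : deriv g b = 1 := by
  have hslope := hg.hasDerivAt.tendsto_slope.comp
    (tendsto_nhdsWithin_iff.2 ⟨hu, Eventually.of_forall hub⟩)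
  have hone : slope g b ∘ u = fun _ => 1 := funext fun n => by
    simp [slope_def_field, hgu, hgb, sub_ne_zero.2 (hub n)]
  exact tendsto_nhds_unique hslope (hone ▸ tendsto_const_nhds)

lemma deriv_iterate_le_exp_mul_of_lipschitzOnWith {s : Set ℝ} {C : NNReal} {L : ℝ} {n : ℕ}
    {y z : ℝ} (hf : ∀ x, 0 < deriv f x)
    (hlip : LipschitzOnWith C (fun x => Real.log (deriv f x)) s)
    (hy : ∀ j, f^[j] y ∈ s) (hz : ∀ j, f^[j] z ∈ s)
    (hsum : ∑ j ∈ Finset.range n, dist (f^[j] y) (f^[j] z) ≤ L) :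
    deriv f^[n] y ≤ Real.exp (C * L) * deriv f^[n] z := by
  have hdiff : Differentiable ℝ f := fun x => differentiableAt_of_deriv_ne_zero (hf x).ne'
  have hlog : ∀ w,
      Real.log (deriv f^[n] w) = ∑ j ∈ Finset.range n, Real.log (deriv f (f^[j] w)) := by
    intro w
    rw [deriv_iterate_eq_prod hdiff, Real.log_prod fun j _ => (hf _).ne']
  have hterm : ∀ j, Real.log (deriv f (f^[j] y)) - Real.log (deriv f (f^[j] z))
      ≤ C * dist (f^[j] y) (f^[j] z) := fun j =>
    (le_abs_self _).trans (hlip.dist_le_mul _ (hy j) _ (hz j))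
  have hlogle : Real.log (deriv f^[n] y) ≤ C * L + Real.log (deriv f^[n] z) := by
    rw [hlog, hlog, ← sub_le_iff_le_add, ← Finset.sum_sub_distrib]
    calc _ ≤ ∑ j ∈ Finset.range n, C * dist (f^[j] y) (f^[j] z) :=
          Finset.sum_le_sum fun j _ => hterm j
      _ ≤ C * L := by rw [← Finset.mul_sum]; exact mul_le_mul_of_nonneg_left hsum C.2
  calc deriv f^[n] y = Real.exp (Real.log (deriv f^[n] y)) :=
        (Real.exp_log (deriv_iterate_pos hf n y)).symm
    _ ≤ Real.exp (C * L + Real.log (deriv f^[n] z)) := Real.exp_le_exp.2 hlogle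
    _ = Real.exp (C * L) * deriv f^[n] z := by
        rw [Real.exp_add, Real.exp_log (deriv_iterate_pos hf n z)]

lemma sum_dist_iterate_le (hf : Monotone f) {p y z : ℝ} (hy : y ∈ Icc p (f p))
    (hz : z ∈ Icc p (f p)) (n : ℕ) :
    ∑ j ∈ Finset.range n, dist (f^[j] y) (f^[j] z) ≤ f^[n] p - p := by
  have hterm : ∀ j, dist (f^[j] y) (f^[j] z) ≤ f^[j + 1] p - f^[j] p := fun j => by
    have hI := (hf.iterate j).mapsTo_Icc (a := p) (b := f p)
    rw [← iterate_succ_apply] at hI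
    exact Real.dist_le_of_mem_Icc (hI hy) (hI hz)
  calc _ ≤ ∑ j ∈ Finset.range n, (f^[j + 1] p - f^[j] p) :=
        Finset.sum_le_sum fun j _ => hterm j
    _ = f^[n] p - p := Finset.sum_range_sub (fun j => f^[j] p) n

end IterateDeriv

section Kopell

variable {f g : ℝ → ℝ} {p b : ℝ}

lemma exists_deriv_iterate_le_mul_of_lt_self (hf : ContDiff ℝ 2 f) (hf' : ∀ x, 0 < deriv f x)
    (hpb : p ≤ b) (hfb : f b = b) (hlt : ∀ y ∈ Ico p b, y < f y) :
    ∃ K, ∀ n, ∀ y ∈ Icc p (f p), ∀ z ∈ Icc p (f p),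
      deriv f^[n] y ≤ K * deriv f^[n] z := by
  have hfm : Monotone f := (strictMono_of_deriv_pos hf').monotone
  obtain ⟨C, hC⟩ : ∃ C, LipschitzOnWith C (fun x => Real.log (deriv f x)) (Icc p b) :=
    ((hf.deriv' (n := 1)).log fun x => (hf' x).ne').contDiffOn.exists_lipschitzOnWith
      one_ne_zero (convex_Icc p b) isCompact_Icc
  have hI := mapsTo_Icc_of_lt_self hfm hfb hlt
  have hsub : Icc p (f p) ⊆ Icc p b := Icc_subset_Icc_right (hfb ▸ hfm hpb)
  refine ⟨Real.exp (C * (b - p)), fun n y hy z hz => ?_⟩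
  refine deriv_iterate_le_exp_mul_of_lipschitzOnWith hf' hC (fun j => hI.iterate j (hsub hy))
    (fun j => hI.iterate j (hsub hz)) ((sum_dist_iterate_le hfm hy hz n).trans ?_)
  linarith [(hI.iterate n ⟨le_rfl, hpb⟩).2]

lemma exists_pos_le_deriv_iterate_of_commute (hf : ContDiff ℝ 2 f) (hf' : ∀ x, 0 < deriv f x)
    (hg : ContDiff ℝ 1 g) (hgm : Monotone g) (hcomm : Function.Commute f g) (hpb : p < b)
    (hfb : f b = b) (hlt : ∀ y ∈ Ico p b, y < f y) (hgp : g p = p) :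
    ∃ m > 0, ∀ k, ∀ z ∈ Icc p (f p), m ≤ deriv g^[k] z := by
  have hfm : StrictMono f := strictMono_of_deriv_pos hf'
  have hdf : Differentiable ℝ f := hf.differentiable two_ne_zero
  have hdg : Differentiable ℝ g := hg.differentiable one_ne_zero
  obtain ⟨K, hK⟩ := exists_deriv_iterate_le_mul_of_lt_self hf hf' hpb.le hfb hlt
  have hsub : Icc p (f p) ⊆ Icc p b := Icc_subset_Icc_right (hfb ▸ hfm.monotone hpb.le)
  have htend : ∀ z ∈ Icc p b, Tendsto (fun n => f^[n] z) atTop (𝓝 b) := fun z hz =>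
    tendsto_iterate_of_lt_self hfm.monotone hf.continuous hfb hlt hz
  have hgfix : ∀ n, g (f^[n] p) = f^[n] p := fun n => by rw [← hcomm.iterate_left n p, hgp]
  have hgb : g b = b := (isClosed_eq hg.continuous continuous_id).mem_of_tendsto
    (htend p ⟨le_rfl, hpb.le⟩) (Eventually.of_forall hgfix)
  have hgI : MapsTo g (Icc p (f p)) (Icc p (f p)) := by
    simpa only [hgp, (hcomm p).symm] using hgm.mapsTo_Icc (a := p) (b := f p)
  -- `g^[k]` fixes the points `f^[n] p`, which accumulate at `b` from the left
  have hderiv_b : ∀ k, deriv g^[k] b = 1 := fun k =>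
    deriv_eq_one_of_tendsto_fixedPoints (hdg.iterate k b) (iterate_fixed hgb k)
      (htend p ⟨le_rfl, hpb.le⟩)
      (fun n => ((mapsTo_Ico_of_lt_self hfm hfb hlt).iterate n ⟨le_rfl, hpb⟩).2.ne)
      (fun n => iterate_fixed (hgfix n) k)
  have hchain : ∀ n k z, deriv f^[n] (g^[k] z) * deriv g^[k] z
      = deriv g^[k] (f^[n] z) * deriv f^[n] z := fun n k z => by
    rw [← deriv_comp z (hdf.iterate n _) (hdg.iterate k z),
      ← deriv_comp z (hdg.iterate k _) (hdf.iterate n z),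
      (hcomm.iterate_iterate n k).semiconj.comp_eq]
  have hKpos : 0 < K := by
    have hp : p ∈ Icc p (f p) := ⟨le_rfl, (hlt p ⟨le_rfl, hpb⟩).le⟩
    exact zero_lt_one.trans_le (by simpa using hK 0 p hp p hp)
  refine ⟨K⁻¹, inv_pos.2 hKpos, fun k z hz => ?_⟩
  have hbound : ∀ n, deriv g^[k] (f^[n] z) ≤ K * deriv g^[k] z := fun n => by
    refine le_of_mul_le_mul_right ?_ (deriv_iterate_pos hf' n z)
    rw [← hchain, mul_right_comm]
    exact mul_le_mul_of_nonneg_right (hK n _ (hgI.iterate k hz) z hz) (hgm.iterate k).deriv_nonneg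
  have hlim : Tendsto (fun n => deriv g^[k] (f^[n] z)) atTop (𝓝 1) :=
    hderiv_b k ▸ ((hg.iterate k).continuous_deriv le_rfl).tendsto b |>.comp (htend z (hsub hz))
  rw [inv_le_iff_one_le_mul₀' hKpos]
  exact le_of_tendsto' hlim hbound

lemma eqOn_id_of_le_deriv_iterate {q m : ℝ} (hg : Differentiable ℝ g) (hgm : Monotone g)
    (hgp : g p = p) (hgq : g q = q) (hm : 0 < m)
    (hbound : ∀ k, ∀ z ∈ Icc p q, m ≤ deriv g^[k] z) : EqOn g id (Icc p q) := by
  have hI : MapsTo g (Icc p q) (Icc p q) := by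
    simpa only [hgp, hgq] using hgm.mapsTo_Icc (a := p) (b := q)
  have hstretch : ∀ k, ∀ α ∈ Icc p q, ∀ β ∈ Icc p q, α ≤ β →
      m * (β - α) ≤ g^[k] β - g^[k] α := fun k =>
    (convex_Icc p q).mul_sub_le_image_sub_of_le_deriv
      (hg.iterate k).continuous.continuousOn (hg.iterate k).differentiableOn
      (fun z hz => hbound k z (interior_subset hz))
  intro x hx
  show g x = x
  obtain ⟨L, -, hL⟩ := exists_tendsto_iterate_of_mapsTo_Icc hgm hI hx
  have hstep : Tendsto (fun k => g^[k] (g x) - g^[k] x) atTop (𝓝 0) := by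
    simpa only [sub_self] using ((hL.comp (tendsto_add_atTop_nat 1)).sub hL).congr fun k => by
      simp only [comp_apply, iterate_succ_apply]
  rcases le_total x (g x) with h | h
  · have := ge_of_tendsto' hstep fun k => hstretch k x hx (g x) (hI hx) h
    exact le_antisymm (by nlinarith) h
  · have := ge_of_tendsto' hstep.neg fun k => (hstretch k (g x) (hI hx) x hx h).trans_eq
      (neg_sub _ _).symm
    exact le_antisymm h (by nlinarith)

theorem kopell_eqOn_Icc (hf : ContDiff ℝ 2 f) (hf' : ∀ x, 0 < deriv f x)
    (hg : ContDiff ℝ 1 g) (hgm : Monotone g) (hcomm : Function.Commute f g) (hpb : p < b)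
    (hfb : f b = b) (hlt : ∀ y ∈ Ico p b, y < f y) (hgp : g p = p) :
    EqOn g id (Icc p (f p)) := by
  obtain ⟨m, hm, hbound⟩ :=
    exists_pos_le_deriv_iterate_of_commute hf hf' hg hgm hcomm hpb hfb hlt hgp
  exact eqOn_id_of_le_deriv_iterate (hg.differentiable one_ne_zero) hgm hgp
    (by rw [← hcomm p, hgp]) hm hbound

end Kopell

section FixedPoints

variable {f g : ℝ → ℝ} {a z : ℝ}

lemma exists_fixedPoint_lt_self_on_Ico (hf : Continuous f) (ha : a < f a) (hz : f z = z)
    (haz : a < z) : ∃ b, a < b ∧ f b = b ∧ ∀ y ∈ Ico a b, y < f y := by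
  obtain ⟨b, ⟨hfb, hab, -⟩, hleast⟩ :=
    (isCompact_Icc.inter_left (isClosed_eq hf continuous_id)).exists_isLeast
      ⟨z, hz, haz.le, le_rfl⟩
  refine ⟨b, hab.lt_of_ne (by rintro rfl; exact ha.ne' hfb), hfb, fun y hy => ?_⟩
  by_contra! hfy
  obtain ⟨t, ht, hft⟩ : ∃ t ∈ Icc a y, f t - t = 0 :=
    intermediate_value_Icc' hy.1 (hf.sub continuous_id).continuousOn
      ⟨sub_nonpos.2 hfy, sub_nonneg.2 ha.le⟩
  have hbz : b ≤ z := hleast ⟨hz, haz.le, le_rfl⟩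
  have hbt : b ≤ t := hleast ⟨sub_eq_zero.1 hft, ht.1, by linarith [ht.2, hy.2]⟩
  linarith [ht.2, hy.2]

lemma mem_interior_fixedPoints_of_lt_self {b : ℝ} (hf : ContDiff ℝ 2 f)
    (hf' : ∀ x, 0 < deriv f x) (hg : ContDiff ℝ 1 g) (hgm : Monotone g)
    (hcomm : Function.Commute f g) (hab : a < b) (hfb : f b = b) (hlt : ∀ y ∈ Ico a b, y < f y)
    (hga : g a = a) : a ∈ interior {y | g y = y} := by
  have hfm : StrictMono f := strictMono_of_deriv_pos hf'
  have hfix := kopell_eqOn_Icc hf hf' hg hgm hcomm hab hfb hlt hga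
  have hfa : a < f a := hlt a ⟨le_rfl, hab⟩
  refine mem_interior.2 ⟨{x | a < f x} ∩ Iio (f a), fun x ⟨hax, hxa⟩ => ?_,
    (isOpen_lt continuous_const hf.continuous).inter isOpen_Iio, hfa, hfa⟩
  rcases le_total a x with h | h
  · exact hfix ⟨h, hxa.le⟩
  · -- `f` moves the left half of the neighbourhood into `[a, f a]`
    exact hfm.injective ((hcomm x).trans (hfix ⟨hax.le, hfm.monotone h⟩))

lemma mem_interior_fixedPoints_of_lt_fixedPoint (hf : IsDiffeoR 2 f) (hg : IsDiffeoR 2 g)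
    (hcomm : Function.Commute f g) (hga : g a = a) (hfa : f a ≠ a) (hz : f z = z)
    (haz : a < z) : a ∈ interior {y | g y = y} := by
  wlog h : a < f a generalizing f
  · have hl := leftInverse_invFun hf.1.1
    have hr := rightInverse_invFun hf.1.2
    refine this hf.invFun (hcomm.semiconj.inverse_left hl hr)
      (fun h => hfa ((congrArg f h).symm.trans (hr a)))
      ((congrArg (invFun f) hz).symm.trans (hl z)) ?_
    rw [← hf.strictMono.lt_iff_lt, hr]
    exact (not_lt.1 h).lt_of_ne hfa
  obtain ⟨b, hab, hfb, hlt⟩ := exists_fixedPoint_lt_self_on_Ico hf.2.1.continuous h hz haz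
  exact mem_interior_fixedPoints_of_lt_self hf.2.1 hf.2.2 (hg.2.1.of_le one_le_two)
    hg.strictMono.monotone hcomm hab hfb hlt hga

lemma mem_interior_fixedPoints (hf : IsDiffeoR 2 f) (hg : IsDiffeoR 2 g)
    (hcomm : Function.Commute f g) (hfix : ∃ z, f z = z) (hga : g a = a) (hfa : f a ≠ a) :
    a ∈ interior {y | g y = y} := by
  obtain ⟨z, hz⟩ := hfix
  rcases lt_or_gt_of_ne (show a ≠ z by rintro rfl; exact hfa hz) with haz | hza
  · exact mem_interior_fixedPoints_of_lt_fixedPoint hf hg hcomm hga hfa hz haz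
  · have hneg := mem_interior_fixedPoints_of_lt_fixedPoint hf.conj_neg hg.conj_neg
      (fun x => by simp only [neg_neg, hcomm (-x)]) (by simp [hga]) (by simpa [neg_eq_iff_eq_neg])
      (by simp [hz]) (neg_lt_neg hza)
    have hS : {y : ℝ | -g (-y) = y} = Homeomorph.neg ℝ ⁻¹' {y | g y = y} := by
      ext y; simp [neg_eq_iff_eq_neg]
    rw [hS, ← Homeomorph.preimage_interior] at hneg
    simpa using hneg

lemma frontier_fixedPoints_subset (hf : IsDiffeoR 2 f) (hg : IsDiffeoR 2 g)
    (hcomm : Function.Commute f g) (hfix : ∃ z, f z = z) :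
    frontier {y | g y = y} ⊆ {y | f y = y} := by
  have hclosed : IsClosed {y | g y = y} := isClosed_eq hg.2.1.continuous continuous_id
  intro a ha
  rw [hclosed.frontier_eq] at ha
  by_contra hfa
  exact ha.2 (mem_interior_fixedPoints hf hg hcomm hfix ha.1 hfa)

end FixedPoints

lemma IsPreconnected.subset_of_disjoint_frontier {X : Type*} [TopologicalSpace X] {s t : Set X}
    (ht : IsPreconnected t) (hts : (t ∩ s).Nonempty) (hd : Disjoint t (frontier s)) :
    t ⊆ s := by
  have hint : ∀ x ∈ t, x ∈ closure s → x ∈ interior s := fun x hx hcl =>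
    by_contra fun h => hd.ne_of_mem hx ⟨hcl, h⟩ rfl
  refine (ht.subset_of_closure_inter_subset isOpen_interior ?_ ?_).trans interior_subset
  · obtain ⟨x, hxt, hxs⟩ := hts
    exact ⟨x, hxt, hint x hxt (subset_closure hxs)⟩
  · rintro x ⟨hx, hxt⟩
    exact hint x hxt (closure_mono interior_subset hx)

section Components

variable {f : ℝ → ℝ} {S : Set ℝ}

lemma uIcc_subset_of_frontier_subset_fixedPoints (hf : StrictMono f)
    (hfr : frontier S ⊆ {y | f y = y}) {y : ℝ} (hy : y ∈ S) : uIcc y (f y) ⊆ S := by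
  by_cases hfy : f y = y
  · rw [hfy, uIcc_self]
    exact singleton_subset_iff.2 hy
  refine isPreconnected_uIcc.subset_of_disjoint_frontier ⟨y, left_mem_uIcc, hy⟩
    (disjoint_left.2 fun u hu hfru => hfy ?_)
  have hfu : f u = u := hfr hfru
  have hu : u = f y := by
    rcases mem_uIcc.1 hu with ⟨h1, h2⟩ | ⟨h1, h2⟩
    · exact le_antisymm h2 ((hf.monotone h1).trans_eq hfu)
    · exact le_antisymm (hfu.symm.trans_le (hf.monotone h2)) h1
  exact hf.injective (by rw [← hu, hfu])

lemma image_connectedComponentIn_eq_of_frontier_subset (hf : StrictMono f) (hsurj : Surjective f)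
    (hS : f ⁻¹' S ⊆ S) (hfr : frontier S ⊆ {y | f y = y}) (x : ℝ) :
    f '' connectedComponentIn S x = connectedComponentIn S x := by
  have hseg : ∀ y ∈ S, IsPreconnected (uIcc y (f y)) ∧ uIcc y (f y) ⊆ S := fun y hy =>
    ⟨isPreconnected_uIcc, uIcc_subset_of_frontier_subset_fixedPoints hf hfr hy⟩
  apply Subset.antisymm
  · rintro _ ⟨y, hy, rfl⟩
    have hyS := connectedComponentIn_subset S x hy
    rw [connectedComponentIn_eq hy]
    exact (hseg y hyS).1.subset_connectedComponentIn left_mem_uIcc (hseg y hyS).2 right_mem_uIcc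
  · intro y hy
    obtain ⟨w, rfl⟩ := hsurj y
    have hwS : w ∈ S := hS (connectedComponentIn_subset S x hy)
    refine ⟨w, ?_, rfl⟩
    rw [connectedComponentIn_eq hy]
    exact (hseg w hwS).1.subset_connectedComponentIn right_mem_uIcc (hseg w hwS).2 left_mem_uIcc

end Components

lemma image_connectedComponentIn_fixedPoints {f g : ℝ → ℝ} (hf : IsDiffeoR 2 f)
    (hg : IsDiffeoR 2 g) (hcomm : Function.Commute f g) (hfix : ∃ z, f z = z) (x : ℝ) :
    f '' connectedComponentIn {y | g y = y} x = connectedComponentIn {y | g y = y} x :=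
  image_connectedComponentIn_eq_of_frontier_subset (S := {y | g y = y}) hf.strictMono hf.1.2
    (fun y hy => hf.1.1 ((hcomm y).trans hy)) (frontier_fixedPoints_subset hf hg hcomm hfix) x

/-- If `f` and `g` are commuting orientation-preserving `C²` diffeomorphisms of
`ℝ`, each having a fixed point, then `f` maps each connected component of
`Fix(g)` onto itself and the frontier of `Fix(g)` is contained in `Fix(f)`;
and symmetrically with the roles of `f` and `g` reversed. -/
theorem fix_components_preserved_of_commuting_C2_diffeos
    (f g : ℝ → ℝ) (hf : IsDiffeoR 2 f) (hg : IsDiffeoR 2 g)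
    (hcomm : ∀ x : ℝ, f (g x) = g (f x))
    (hfixf : ∃ x : ℝ, f x = x) (hfixg : ∃ x : ℝ, g x = x) :
    (∀ x ∈ {y : ℝ | g y = y},
      f '' connectedComponentIn {y : ℝ | g y = y} x
        = connectedComponentIn {y : ℝ | g y = y} x) ∧
    frontier {y : ℝ | g y = y} ⊆ {y : ℝ | f y = y} ∧
    (∀ x ∈ {y : ℝ | f y = y},
      g '' connectedComponentIn {y : ℝ | f y = y} x
        = connectedComponentIn {y : ℝ | f y = y} x) ∧
    frontier {y : ℝ | f y = y} ⊆ {y : ℝ | g y = y} := by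
  have hcomm' : Function.Commute g f := fun x => (hcomm x).symm
  exact ⟨fun x _ => image_connectedComponentIn_fixedPoints hf hg hcomm hfixf x,
    frontier_fixedPoints_subset hf hg hcomm hfixf,
    fun x _ => image_connectedComponentIn_fixedPoints hg hf hcomm' hfixg x,
    frontier_fixedPoints_subset hg hf hcomm' hfixg⟩
end
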